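/- arXiv:2409.08697 — 10 statements merged into one kernel-verified Lean document; each statement's English description precedes it below -/
import Mathlib

section
/- Let X be a real Banach space, x ∈ S_X, δ ≥ 0, and 0 < t₁ < t₂. Then Q_{B_X}(t₂ x, δ) ⊆ Q_{B_X}(t₁ x, δ) ⊆ Q_{B_X}(t₂ x, (t₂/t₁)δ). -/
/-- δ-almost farthest points of the closed unit ball from `w`, using
`r(B_X, w) = 1 + ‖w‖`. -/
def QB {X : Type*} [NormedAddCommGroup X] (w : X) (δ : ℝ) : Set X :=
  {y | ‖y‖ ≤ 1 ∧ 1 + ‖w‖ - δ ≤ ‖w - y‖}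

theorem stmt8 {X : Type*} [NormedAddCommGroup X] [NormedSpace ℝ X] [CompleteSpace X]
    (x : X) (hx : ‖x‖ = 1) (δ : ℝ) (hδ : 0 ≤ δ)
    (t₁ t₂ : ℝ) (ht₁ : 0 < t₁) (ht : t₁ < t₂) :
    QB (t₂ • x) δ ⊆ QB (t₁ • x) δ ∧ QB (t₁ • x) δ ⊆ QB (t₂ • x) ((t₂ / t₁) * δ) := by
  have ht₂ : 0 < t₂ := ht₁.trans ht
  have h1 : ‖t₁ • x‖ = t₁ := by rw [norm_smul, hx, Real.norm_eq_abs, abs_of_pos ht₁, mul_one]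
  have h2 : ‖t₂ • x‖ = t₂ := by rw [norm_smul, hx, Real.norm_eq_abs, abs_of_pos ht₂, mul_one]
  constructor
  · rintro y ⟨hy, hfar⟩
    refine ⟨hy, ?_⟩
    rw [h2] at hfar; rw [h1]
    have key : ‖t₂ • x - y‖ ≤ ‖(t₂ - t₁) • x‖ + ‖t₁ • x - y‖ := by
      calc ‖t₂ • x - y‖ = ‖(t₂ - t₁) • x + (t₁ • x - y)‖ := by
            congr 1; rw [sub_smul]; abel
        _ ≤ _ := norm_add_le _ _
    have hd : ‖(t₂ - t₁) • x‖ = t₂ - t₁ := by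
      rw [norm_smul, hx, Real.norm_eq_abs, abs_of_pos (by linarith), mul_one]
    rw [hd] at key
    linarith
  · rintro y ⟨hy, hfar⟩
    refine ⟨hy, ?_⟩
    rw [h1] at hfar; rw [h2]
    set s := t₂ / t₁ with hs
    have hs1 : 1 < s := (one_lt_div ht₁).mpr ht
    have hst : s * t₁ = t₂ := div_mul_cancel₀ _ ht₁.ne'
    have key : s * ‖t₁ • x - y‖ ≤ ‖t₂ • x - y‖ + ‖(s - 1) • y‖ := by
      calc s * ‖t₁ • x - y‖ = ‖s • (t₁ • x - y)‖ := by
            rw [norm_smul, Real.norm_eq_abs, abs_of_pos (by linarith)]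
        _ = ‖(t₂ • x - y) - (s - 1) • y‖ := by
            congr 1
            rw [smul_sub, smul_smul, hst, sub_smul, one_smul]; abel
        _ ≤ _ := norm_sub_le _ _
    have hby : ‖(s - 1) • y‖ ≤ s - 1 := by
      rw [norm_smul, Real.norm_eq_abs, abs_of_pos (by linarith)]
      nlinarith
    have hmul : s * (1 + t₁ - δ) ≤ s * ‖t₁ • x - y‖ :=
      mul_le_mul_of_nonneg_left hfar (by linarith)
    have : s * (1 + t₁ - δ) = s + t₂ - s * δ := by
      rw [mul_sub, mul_add, mul_one, hst]
    linarith
end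

section
/- Let X be a real Banach space, F a nonempty closed bounded subset, and x ∈ X such that Q_F(x) ≠ ∅ (F is remotal at x). If F is sup-compact at x (every maximizing sequence for x in F has a convergent subsequence with limit in F), then Q_F(x) is compact and F is strongly remotal at x, i.e., for every ε > 0 there exists δ > 0 with Q_F(x,δ) ⊆ Q_F(x) + ε B_X. -/
open Pointwise

open Filter Topology

noncomputable def farR {X : Type*} [NormedAddCommGroup X] (F : Set X) (x : X) : ℝ :=
  sSup ((fun y => ‖x - y‖) '' F)

def QF {X : Type*} [NormedAddCommGroup X] (F : Set X) (x : X) (δ : ℝ) : Set X :=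
  {y ∈ F | farR F x - δ ≤ ‖x - y‖}

/-!
A sequence `yₙ ∈ Q_F(x, δₙ)` with `δₙ → 0` is maximizing for `x`, so by sup-compactness a
subsequence converges to some `l ∈ F`, and continuity of the norm puts `l` in `Q_F(x)`. With
`δₙ = 0` this makes `Q_F(x)` sequentially compact. With `δₙ = 1/(n+1)` and `yₙ` chosen at
distance more than `ε` from `Q_F(x)`, the limit `l ∈ Q_F(x)` contradicts the choice, which
gives strong remotality.
-/

section

variable {X : Type*} [NormedAddCommGroup X] {F : Set X} {x : X}

def SupCompactAt (F : Set X) (x : X) : Prop :=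
  ∀ y : ℕ → X, (∀ n, y n ∈ F) →
    Tendsto (fun n => ‖x - y n‖) atTop (𝓝 (farR F x)) →
    ∃ φ : ℕ → ℕ, StrictMono φ ∧ ∃ l ∈ F, Tendsto (y ∘ φ) atTop (𝓝 l)

-- Boundedness is essential: `sSup` of an unbounded set of reals is the junk value `0`.
theorem norm_sub_le_farR (hbd : Bornology.IsBounded F) {y : X} (hy : y ∈ F) :
    ‖x - y‖ ≤ farR F x := by
  refine le_csSup ?_ ⟨y, hy, rfl⟩
  obtain ⟨C, hC⟩ := (Metric.isBounded_iff_subset_closedBall x).mp hbd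
  refine ⟨C, ?_⟩
  rintro _ ⟨z, hz, rfl⟩
  simpa [dist_eq_norm, norm_sub_rev] using Metric.mem_closedBall.mp (hC hz)

theorem tendsto_norm_sub_farR_of_mem_QF (hbd : Bornology.IsBounded F) {y : ℕ → X}
    {δ : ℕ → ℝ} (hy : ∀ n, y n ∈ QF F x (δ n)) (hδ : Tendsto δ atTop (𝓝 0)) :
    Tendsto (fun n => ‖x - y n‖) atTop (𝓝 (farR F x)) := by
  have hlower : Tendsto (fun n => farR F x - δ n) atTop (𝓝 (farR F x)) := by
    simpa using tendsto_const_nhds.sub hδ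
  exact tendsto_of_tendsto_of_tendsto_of_le_of_le hlower tendsto_const_nhds
    (fun n => (hy n).2) (fun n => norm_sub_le_farR hbd (hy n).1)

theorem mem_QF_zero_of_tendsto {y : ℕ → X} {l : X} (hl : l ∈ F)
    (hmax : Tendsto (fun n => ‖x - y n‖) atTop (𝓝 (farR F x)))
    (hconv : Tendsto y atTop (𝓝 l)) : l ∈ QF F x 0 := by
  have hnorm : Tendsto (fun n => ‖x - y n‖) atTop (𝓝 ‖x - l‖) :=
    (tendsto_const_nhds.sub hconv).norm
  refine ⟨hl, ?_⟩
  rw [sub_zero, tendsto_nhds_unique hnorm hmax]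

theorem SupCompactAt.exists_subseq_tendsto_mem_QF (hsup : SupCompactAt F x)
    (hbd : Bornology.IsBounded F) {y : ℕ → X} {δ : ℕ → ℝ} (hy : ∀ n, y n ∈ QF F x (δ n))
    (hδ : Tendsto δ atTop (𝓝 0)) :
    ∃ φ : ℕ → ℕ, StrictMono φ ∧ ∃ l ∈ QF F x 0, Tendsto (y ∘ φ) atTop (𝓝 l) := by
  have hmax := tendsto_norm_sub_farR_of_mem_QF hbd hy hδ
  obtain ⟨φ, hφ, l, hl, hconv⟩ := hsup y (fun n => (hy n).1) hmax
  exact ⟨φ, hφ, l, mem_QF_zero_of_tendsto hl (hmax.comp hφ.tendsto_atTop) hconv, hconv⟩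

theorem SupCompactAt.isCompact_QF_zero (hsup : SupCompactAt F x)
    (hbd : Bornology.IsBounded F) : IsCompact (QF F x 0) := by
  refine IsSeqCompact.isCompact fun y hy => ?_
  obtain ⟨φ, hφ, l, hl, hconv⟩ :=
    hsup.exists_subseq_tendsto_mem_QF hbd hy (tendsto_const_nhds (x := (0 : ℝ)))
  exact ⟨l, hl, φ, hφ, hconv⟩

theorem SupCompactAt.exists_QF_subset_add_closedBall (hsup : SupCompactAt F x)
    (hbd : Bornology.IsBounded F) {ε : ℝ} (hε : 0 < ε) :
    ∃ δ > 0, QF F x δ ⊆ QF F x 0 + Metric.closedBall (0 : X) ε := by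
  by_contra! h
  choose y hyQ hyfar using fun n : ℕ =>
    Set.not_subset.mp (h (1 / (n + 1)) Nat.one_div_pos_of_nat)
  obtain ⟨φ, -, l, hl, hconv⟩ :=
    hsup.exists_subseq_tendsto_mem_QF hbd hyQ tendsto_one_div_add_atTop_nhds_zero_nat
  obtain ⟨n, hn⟩ := Metric.tendsto_atTop.mp hconv ε hε
  refine hyfar (φ n) ⟨l, hl, y (φ n) - l, ?_, add_sub_cancel l (y (φ n))⟩
  simpa [dist_eq_norm] using (hn n le_rfl).le

end

theorem stmt9_general {X : Type*} [NormedAddCommGroup X]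
    (F : Set X) (hbd : Bornology.IsBounded F)
    (x : X)
    (hsup : ∀ y : ℕ → X, (∀ n, y n ∈ F) →
      Tendsto (fun n => ‖x - y n‖) atTop (𝓝 (farR F x)) →
      ∃ φ : ℕ → ℕ, StrictMono φ ∧ ∃ l ∈ F, Tendsto (y ∘ φ) atTop (𝓝 l)) :
    IsCompact (QF F x 0) ∧
      ∀ ε > 0, ∃ δ > 0, QF F x δ ⊆ QF F x 0 + Metric.closedBall (0 : X) ε :=
  ⟨SupCompactAt.isCompact_QF_zero hsup hbd,
    fun _ hε => SupCompactAt.exists_QF_subset_add_closedBall hsup hbd hε⟩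

theorem stmt9 {X : Type*} [NormedAddCommGroup X] [NormedSpace ℝ X] [CompleteSpace X]
    (F : Set X) (hne : F.Nonempty) (hcl : IsClosed F) (hbd : Bornology.IsBounded F)
    (x : X) (hrem : (QF F x 0).Nonempty)
    (hsup : ∀ y : ℕ → X, (∀ n, y n ∈ F) →
      Tendsto (fun n => ‖x - y n‖) atTop (𝓝 (farR F x)) →
      ∃ φ : ℕ → ℕ, StrictMono φ ∧ ∃ l ∈ F, Tendsto (y ∘ φ) atTop (𝓝 l)) :
    IsCompact (QF F x 0) ∧
      ∀ ε > 0, ∃ δ > 0, QF F x δ ⊆ QF F x 0 + Metric.closedBall (0 : X) ε :=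
  stmt9_general F hbd x hsup
end

section
/- Let X be a real Banach space, F a nonempty closed bounded subset, and x ∈ X with Q_F(x) ≠ ∅. If Q_F(x) is compact and F is strongly remotal at x (for every ε>0 there is δ>0 with Q_F(x,δ) ⊆ Q_F(x)+εB_X), then every maximizing sequence in F for x has a convergent subsequence (F is sup-compact at x). -/
/-! A maximizing sequence eventually enters every `Q_F(x, δ)`, hence, by strong remotality, every
closed `ε`-thickening of the compact set `Q_F(x)` (for compact `K`, `K + ε B_X` is that thickening).
Taking nearest points of `Q_F(x)`, a convergent subsequence of these drags the corresponding
subsequence of the maximizing sequence along with it. -/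

open Pointwise

open Filter Topology

open Metric

theorem infDist_le_of_mem_cthickening {α : Type*} [PseudoMetricSpace α] {K : Set α} {y : α}
    {ε : ℝ} (hε : 0 ≤ ε) (hy : y ∈ cthickening ε K) : infDist y K ≤ ε :=
  ENNReal.toReal_le_of_le_ofReal hε (mem_cthickening_iff.1 hy)

theorem IsCompact.exists_subseq_tendsto_of_eventually_mem_cthickening {α : Type*}
    [PseudoMetricSpace α] {K : Set α} (hK : IsCompact K) {y : ℕ → α}
    (hy : ∀ ε > 0, ∀ᶠ n in atTop, y n ∈ cthickening ε K) :
    ∃ l ∈ K, ∃ φ : ℕ → ℕ, StrictMono φ ∧ Tendsto (y ∘ φ) atTop (𝓝 l) := by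
  have hK₀ : K.Nonempty := by
    obtain ⟨n, hn⟩ := (hy 1 one_pos).exists
    by_contra hK₀
    simp [Set.not_nonempty_iff_eq_empty.1 hK₀] at hn
  choose q hqK hq using fun n => hK.exists_infDist_eq_dist hK₀ (y n)
  have hdist : Tendsto (fun n => dist (q n) (y n)) atTop (𝓝 0) := by
    refine tendsto_order.2 ⟨fun a ha => .of_forall fun n => ha.trans_le dist_nonneg,
      fun ε hε => (hy (ε / 2) (half_pos hε)).mono fun n hn => ?_⟩
    rw [dist_comm, ← hq]
    exact (infDist_le_of_mem_cthickening (half_pos hε).le hn).trans_lt (half_lt_self hε)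
  obtain ⟨l, hl, φ, hφ, hql⟩ := hK.tendsto_subseq hqK
  exact ⟨l, hl, φ, hφ, hql.congr_dist (hdist.comp hφ.tendsto_atTop)⟩

theorem eventually_mem_QF_of_tendsto {X : Type*} [NormedAddCommGroup X] {F : Set X} {x : X}
    {y : ℕ → X} (hyF : ∀ n, y n ∈ F)
    (hy : Tendsto (fun n => ‖x - y n‖) atTop (𝓝 (farR F x))) {δ : ℝ} (hδ : 0 < δ) :
    ∀ᶠ n in atTop, y n ∈ QF F x δ :=
  (hy.eventually (eventually_ge_nhds (sub_lt_self _ hδ))).mono fun n hn => ⟨hyF n, hn⟩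

theorem stmt10_general {X : Type*} [NormedAddCommGroup X] (F : Set X) (x : X)
    (hcpt : IsCompact (QF F x 0))
    (hsr : ∀ ε > 0, ∃ δ > 0, QF F x δ ⊆ QF F x 0 + Metric.closedBall (0 : X) ε) :
    ∀ y : ℕ → X, (∀ n, y n ∈ F) →
      Tendsto (fun n => ‖x - y n‖) atTop (𝓝 (farR F x)) →
      ∃ φ : ℕ → ℕ, StrictMono φ ∧ ∃ l, Tendsto (y ∘ φ) atTop (𝓝 l) := by
  intro y hyF hy
  have hthick : ∀ ε > 0, ∀ᶠ n in atTop, y n ∈ cthickening ε (QF F x 0) := fun ε hε => by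
    obtain ⟨δ, hδ, hsub⟩ := hsr ε hε
    rw [← hcpt.add_closedBall_zero hε.le]
    exact (eventually_mem_QF_of_tendsto hyF hy hδ).mono fun n hn => hsub hn
  obtain ⟨l, -, φ, hφ, hl⟩ := hcpt.exists_subseq_tendsto_of_eventually_mem_cthickening hthick
  exact ⟨φ, hφ, l, hl⟩

theorem stmt10 {X : Type*} [NormedAddCommGroup X] [NormedSpace ℝ X] [CompleteSpace X]
    (F : Set X) (hne : F.Nonempty) (hcl : IsClosed F) (hbd : Bornology.IsBounded F)
    (x : X) (hrem : (QF F x 0).Nonempty)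
    (hcpt : IsCompact (QF F x 0))
    (hsr : ∀ ε > 0, ∃ δ > 0, QF F x δ ⊆ QF F x 0 + Metric.closedBall (0 : X) ε) :
    ∀ y : ℕ → X, (∀ n, y n ∈ F) →
      Tendsto (fun n => ‖x - y n‖) atTop (𝓝 (farR F x)) →
      ∃ φ : ℕ → ℕ, StrictMono φ ∧ ∃ l, Tendsto (y ∘ φ) atTop (𝓝 l) :=
  stmt10_general F x hcpt hsr
end

section
/- Let X be a real Banach space, F a nonempty closed bounded subset remotal at x ∈ X. Then every maximizing sequence in F for x converges if and only if diam(Q_F(x, 1/n)) → 0 as n → ∞. -/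
open Filter Topology

lemma norm_le_farR {X : Type*} [NormedAddCommGroup X] {F : Set X}
    (hbd : Bornology.IsBounded F) {x y : X} (hy : y ∈ F) : ‖x - y‖ ≤ farR F x := by
  obtain ⟨R, hR⟩ := hbd.subset_closedBall x
  apply le_csSup
  · refine ⟨R, ?_⟩
    rintro _ ⟨z, hz, rfl⟩
    have := hR hz
    simpa [Metric.mem_closedBall, dist_eq_norm, norm_sub_rev] using this
  · exact ⟨y, hy, rfl⟩

lemma QF_nonempty {X : Type*} [NormedAddCommGroup X] {F : Set X} {x : X}
    (hrem : (QF F x 0).Nonempty) {δ : ℝ} (hδ : 0 ≤ δ) : (QF F x δ).Nonempty := by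
  obtain ⟨y, hyF, hy⟩ := hrem
  exact ⟨y, hyF, by linarith [hy]⟩

theorem stmt11 {X : Type*} [NormedAddCommGroup X] [NormedSpace ℝ X] [CompleteSpace X]
    (F : Set X) (hne : F.Nonempty) (hcl : IsClosed F) (hbd : Bornology.IsBounded F)
    (x : X) (hrem : (QF F x 0).Nonempty) :
    (∀ y : ℕ → X, (∀ n, y n ∈ F) →
        Tendsto (fun n => ‖x - y n‖) atTop (𝓝 (farR F x)) →
        ∃ l, Tendsto y atTop (𝓝 l)) ↔
      Tendsto (fun n : ℕ => Metric.diam (QF F x (1 / n))) atTop (𝓝 0) := by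
  set r := farR F x with hr
  have hQsub : ∀ δ : ℝ, QF F x δ ⊆ F := fun δ z hz => hz.1
  have hQbd : ∀ δ : ℝ, Bornology.IsBounded (QF F x δ) := fun δ => hbd.subset (hQsub δ)
  constructor
  · -- forward direction
    intro h
    -- choose almost-diametral pairs
    have key : ∀ n : ℕ, ∃ p ∈ QF F x (1 / n), ∃ q ∈ QF F x (1 / n),
        Metric.diam (QF F x (1 / n)) < dist p q + 1 / (n + 1) := by
      intro n
      by_contra hcon
      push_neg at hcon
      obtain ⟨z, hz⟩ := QF_nonempty hrem (by positivity : (0:ℝ) ≤ 1 / n)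
      have hzz := hcon z hz z hz
      have h0 : (0:ℝ) ≤ Metric.diam (QF F x (1 / n)) - 1 / (n + 1) := by
        have : dist z z + 1 / ((n:ℝ) + 1) ≤ Metric.diam (QF F x (1 / n)) := hzz
        simp only [dist_self, zero_add] at this
        linarith
      have hle : Metric.diam (QF F x (1 / n)) ≤ Metric.diam (QF F x (1 / n)) - 1 / (n + 1) := by
        apply Metric.diam_le_of_forall_dist_le h0
        intro p hp q hq
        have := hcon p hp q hq
        linarith
      have : (0:ℝ) < 1 / ((n:ℝ) + 1) := by positivity
      linarith
    choose a ha b hb hdiam using key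
    -- interleaved sequence
    set z : ℕ → X := fun n => if Even n then a (n / 2) else b (n / 2) with hzdef
    have hzQ : ∀ n, z n ∈ QF F x (1 / (n / 2 : ℕ)) := by
      intro n
      by_cases hn : Even n
      · simpa [hzdef, hn] using ha (n / 2)
      · simpa [hzdef, hn] using hb (n / 2)
    have hzF : ∀ n, z n ∈ F := fun n => (hzQ n).1
    have hztend : Tendsto (fun n => ‖x - z n‖) atTop (𝓝 r) := by
      rw [Metric.tendsto_atTop]
      intro ε hε
      obtain ⟨N, hN⟩ := exists_nat_one_div_lt hε
      refine ⟨2 * (N + 1), fun n hn => ?_⟩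
      have hub : ‖x - z n‖ ≤ r := norm_le_farR hbd (hzF n)
      have hlb : r - 1 / ((n / 2 : ℕ) : ℝ) ≤ ‖x - z n‖ := (hzQ n).2
      have h2 : (N + 1 : ℕ) ≤ n / 2 := by omega
      have h2' : (0:ℝ) < ((N:ℝ) + 1) := by positivity
      have : (1 : ℝ) / ((n / 2 : ℕ) : ℝ) ≤ 1 / ((N:ℝ) + 1) := by
        apply one_div_le_one_div_of_le h2'
        exact_mod_cast h2
      rw [Real.dist_eq]
      rw [abs_sub_lt_iff]
      constructor <;> [linarith; linarith]
    obtain ⟨l, hl⟩ := h z hzF hztend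
    have hcauchy := hl.cauchySeq
    -- dist (a k) (b k) → 0
    have hab : Tendsto (fun k => dist (a k) (b k)) atTop (𝓝 0) := by
      rw [Metric.tendsto_atTop]
      intro ε hε
      rw [Metric.cauchySeq_iff] at hcauchy
      obtain ⟨N, hN⟩ := hcauchy ε hε
      refine ⟨N, fun k hk => ?_⟩
      have h1 : z (2 * k) = a k := by
        simp [hzdef, Nat.mul_div_cancel_left k (by norm_num : 0 < 2)]
      have h2 : z (2 * k + 1) = b k := by
        have : ¬ Even (2 * k + 1) := by simp [Nat.even_add_one, parity_simps]
        simp only [hzdef, this, if_false]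
        congr 1
        omega
      have := hN (2 * k) (by omega) (2 * k + 1) (by omega)
      rw [h1, h2] at this
      simpa [Real.dist_eq, abs_of_nonneg dist_nonneg] using this
    -- squeeze
    have hg : Tendsto (fun k : ℕ => dist (a k) (b k) + 1 / ((k:ℝ) + 1)) atTop (𝓝 0) := by
      have := hab.add tendsto_one_div_add_atTop_nhds_zero_nat
      simpa using this
    apply squeeze_zero (fun n => Metric.diam_nonneg) (fun n => (hdiam n).le) hg
  · -- backward direction
    intro hd y hyF hymax
    have hcauchy : CauchySeq y := by
      rw [Metric.cauchySeq_iff]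
      intro ε hε
      have hev : ∀ᶠ n : ℕ in atTop, Metric.diam (QF F x (1 / n)) < ε :=
        hd.eventually_lt_const hε
      obtain ⟨n0, hn0⟩ := (hev.and (eventually_ge_atTop 1)).exists
      obtain ⟨hn0d, hn01⟩ := hn0
      have hpos : (0:ℝ) < 1 / (n0:ℝ) := by
        have : (0:ℝ) < (n0:ℝ) := by exact_mod_cast hn01
        positivity
      have hev2 : ∀ᶠ k : ℕ in atTop, r - 1 / (n0:ℝ) < ‖x - y k‖ :=
        hymax.eventually_const_lt (by linarith)
      obtain ⟨N, hN⟩ := hev2.exists_forall_of_atTop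
      refine ⟨N, fun m hm n hn => ?_⟩
      have hmQ : y m ∈ QF F x (1 / n0) := ⟨hyF m, (hN m hm).le⟩
      have hnQ : y n ∈ QF F x (1 / n0) := ⟨hyF n, (hN n hn).le⟩
      calc dist (y m) (y n) ≤ Metric.diam (QF F x (1 / n0)) :=
            Metric.dist_le_diam_of_mem (hQbd _) hmQ hnQ
        _ < ε := hn0d
    obtain ⟨l, hl⟩ := cauchySeq_tendsto_of_complete hcauchy
    exact ⟨l, hl⟩
end

section
/- If a real Banach space X is not rotund, then there exist x₁ ≠ x₂ in S_X such that the whole segment [x₁,x₂] is contained in Q_{S_X}(−(x₁+x₂)); in particular S_X fails to be uniquely remotal at some point outside the closed unit ball. -/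
/-- The set of farthest points of the unit sphere from `w`,
using `r(S_X, w) = 1 + ‖w‖`. -/
def QS0 {X : Type*} [NormedAddCommGroup X] (w : X) : Set X :=
  {y | ‖y‖ = 1 ∧ ‖w - y‖ = 1 + ‖w‖}

/-! If `‖x₁ + x₂‖ = 2` for unit vectors `x₁ ≠ x₂`, the norm is additive on the whole cone
spanned by `x₁` and `x₂`. Hence every point `a • x₁ + b • x₂` of the segment is a unit vector, and
`-(x₁ + x₂) - (a • x₁ + b • x₂) = -((1 + a) • x₁ + (1 + b) • x₂)` has norm `3 = 1 + ‖x₁ + x₂‖`,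
the largest distance from `-(x₁ + x₂)` to the unit sphere. -/

section

variable {E : Type*} [NormedAddCommGroup E] [NormedSpace ℝ E]

theorem norm_smul_add_smul_of_norm_add_eq {x y : E} (h : ‖x + y‖ = ‖x‖ + ‖y‖)
    {a b : ℝ} (ha : 0 ≤ a) (hb : 0 ≤ b) : ‖a • x + b • y‖ = a * ‖x‖ + b * ‖y‖ := by
  wlog hba : b ≤ a generalizing x y a b
  · rw [add_comm (a • x), this (by rw [add_comm, h, add_comm]) hb ha (by linarith), add_comm]
  apply le_antisymm
  · calc ‖a • x + b • y‖ ≤ ‖a • x‖ + ‖b • y‖ := norm_add_le _ _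
      _ = a * ‖x‖ + b * ‖y‖ := by rw [norm_smul, norm_smul, Real.norm_of_nonneg ha,
          Real.norm_of_nonneg hb]
  · have hdecomp : a • (x + y) = (a • x + b • y) + (a - b) • y := by module
    have htri := norm_add_le (a • x + b • y) ((a - b) • y)
    rw [← hdecomp, norm_smul, norm_smul, h, Real.norm_of_nonneg ha,
      Real.norm_of_nonneg (sub_nonneg.mpr hba)] at htri
    linarith

theorem segment_subset_QS0_neg_add {x₁ x₂ : E} (h₁ : ‖x₁‖ = 1) (h₂ : ‖x₂‖ = 1)
    (h : ‖x₁ + x₂‖ = 2) : segment ℝ x₁ x₂ ⊆ QS0 (-(x₁ + x₂)) := by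
  have hadd : ‖x₁ + x₂‖ = ‖x₁‖ + ‖x₂‖ := by rw [h, h₁, h₂]; norm_num
  rintro _ ⟨a, b, ha, hb, hab, rfl⟩
  refine ⟨?_, ?_⟩
  · rw [norm_smul_add_smul_of_norm_add_eq hadd ha hb, h₁, h₂]
    linarith
  · have hdiff : -(x₁ + x₂) - (a • x₁ + b • x₂) = -((1 + a) • x₁ + (1 + b) • x₂) := by module
    rw [hdiff, norm_neg, norm_neg, h,
      norm_smul_add_smul_of_norm_add_eq hadd (by linarith) (by linarith), h₁, h₂]
    linarith

end

theorem stmt13_general {X : Type*} [NormedAddCommGroup X] [NormedSpace ℝ X]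
    (h : ¬ ∀ x₁ x₂ : X, ‖x₁‖ = 1 → ‖x₂‖ = 1 → x₁ ≠ x₂ → ‖(1 / 2 : ℝ) • (x₁ + x₂)‖ < 1) :
    ∃ x₁ x₂ : X, ‖x₁‖ = 1 ∧ ‖x₂‖ = 1 ∧ x₁ ≠ x₂ ∧
      segment ℝ x₁ x₂ ⊆ QS0 (-(x₁ + x₂)) ∧
      1 < ‖-(x₁ + x₂)‖ ∧ ¬ (QS0 (-(x₁ + x₂))).Subsingleton := by
  push Not at h
  obtain ⟨x₁, x₂, h₁, h₂, hne, hmid⟩ := h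
  have hsum : ‖x₁ + x₂‖ = 2 := by
    rw [norm_smul, Real.norm_of_nonneg (by norm_num)] at hmid
    have := norm_add_le x₁ x₂
    linarith
  have hseg := segment_subset_QS0_neg_add h₁ h₂ hsum
  refine ⟨x₁, x₂, h₁, h₂, hne, hseg, by rw [norm_neg, hsum]; norm_num, fun hsub => ?_⟩
  exact hne (hsub (hseg (left_mem_segment ℝ x₁ x₂)) (hseg (right_mem_segment ℝ x₁ x₂)))

theorem stmt13 {X : Type*} [NormedAddCommGroup X] [NormedSpace ℝ X] [CompleteSpace X]
    (h : ¬ ∀ x₁ x₂ : X, ‖x₁‖ = 1 → ‖x₂‖ = 1 → x₁ ≠ x₂ → ‖(1 / 2 : ℝ) • (x₁ + x₂)‖ < 1) :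
    ∃ x₁ x₂ : X, ‖x₁‖ = 1 ∧ ‖x₂‖ = 1 ∧ x₁ ≠ x₂ ∧
      segment ℝ x₁ x₂ ⊆ QS0 (-(x₁ + x₂)) ∧
      1 < ‖-(x₁ + x₂)‖ ∧ ¬ (QS0 (-(x₁ + x₂))).Subsingleton :=
  stmt13_general h
end

section
/- A real Banach space X is compactly locally uniformly rotund (CLUR) if and only if for every x ∈ X \ {0}, every maximizing sequence (y_n) in S_X for x (i.e., ‖x−y_n‖ → 1+‖x‖) has a convergent subsequence. -/
/-!
The two conditions are the same statement after the substitution `y = -x'`: for unit vectors,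
`‖(x' + x) / 2‖ → 1` says exactly that `‖x - (-x')‖ → 2 = 1 + ‖x‖`, and negation preserves
having a convergent subsequence. The only work is to pass from an arbitrary `x ≠ 0` to its
normalisation `u = x / ‖x‖`: the defect `2 - ‖u - y‖` is controlled linearly by the defect
`1 + ‖x‖ - ‖x - y‖`, so maximizing sequences for `x` are maximizing sequences for `u`.
-/

open Filter Topology

section Normalize

variable {E : Type*} [NormedAddCommGroup E] [NormedSpace ℝ E]

lemma two_sub_norm_normalize_sub_le {x y : E} (hx : x ≠ 0) (hy : ‖y‖ = 1) :
    2 - ‖‖x‖⁻¹ • x - y‖ ≤ max 1 ‖x‖⁻¹ * (1 + ‖x‖ - ‖x - y‖) := by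
  set c := ‖x‖
  set u := c⁻¹ • x
  have hc : 0 < c := norm_pos_iff.mpr hx
  have hu : ‖u‖ = 1 := by simpa using norm_smul_inv_norm (𝕜 := ℝ) hx
  have hxu : x = c • u := by rw [smul_inv_smul₀ hc.ne']
  have hgap : 0 ≤ 1 + c - ‖x - y‖ := by linarith [norm_sub_le x y]
  rcases le_or_gt 1 c with hc1 | hc1
  · have hle : ‖x - y‖ ≤ ‖u - y‖ + (c - 1) := by
      calc ‖x - y‖ = ‖(u - y) + (c - 1) • u‖ := by
            rw [hxu, sub_smul, one_smul]; abel_nf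
        _ ≤ ‖u - y‖ + ‖(c - 1) • u‖ := norm_add_le _ _
        _ = ‖u - y‖ + (c - 1) := by
            rw [norm_smul, hu, Real.norm_of_nonneg (by linarith), mul_one]
    calc 2 - ‖u - y‖ ≤ 1 * (1 + c - ‖x - y‖) := by linarith
      _ ≤ max 1 c⁻¹ * (1 + c - ‖x - y‖) := by gcongr; exact le_max_left _ _
  · have hle : ‖x - y‖ ≤ c * ‖u - y‖ + (1 - c) := by
      calc ‖x - y‖ = ‖c • (u - y) + (c - 1) • y‖ := by
            rw [hxu, smul_sub, sub_smul, one_smul]; abel_nf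
        _ ≤ ‖c • (u - y)‖ + ‖(c - 1) • y‖ := norm_add_le _ _
        _ = c * ‖u - y‖ + (1 - c) := by
            rw [norm_smul, norm_smul, hy, Real.norm_of_nonneg hc.le,
              Real.norm_of_nonpos (by linarith)]
            ring
    calc 2 - ‖u - y‖ ≤ c⁻¹ * (1 + c - ‖x - y‖) := by
          rw [le_inv_mul_iff₀ hc]; nlinarith
      _ ≤ max 1 c⁻¹ * (1 + c - ‖x - y‖) := by gcongr; exact le_max_right _ _

lemma tendsto_norm_normalize_sub {x : E} (hx : x ≠ 0) {y : ℕ → E} (hy : ∀ n, ‖y n‖ = 1)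
    (hmax : Tendsto (fun n => ‖x - y n‖) atTop (𝓝 (1 + ‖x‖))) :
    Tendsto (fun n => ‖‖x‖⁻¹ • x - y n‖) atTop (𝓝 2) := by
  have hu : ‖‖x‖⁻¹ • x‖ = 1 := by simpa using norm_smul_inv_norm (𝕜 := ℝ) hx
  have hgap : Tendsto (fun n => max 1 ‖x‖⁻¹ * (1 + ‖x‖ - ‖x - y n‖)) atTop (𝓝 0) := by
    simpa using (tendsto_const_nhds (x := 1 + ‖x‖)).sub hmax |>.const_mul (max 1 ‖x‖⁻¹)
  have hdefect : Tendsto (fun n => 2 - ‖‖x‖⁻¹ • x - y n‖) atTop (𝓝 0) := by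
    refine squeeze_zero (fun n => ?_) (fun n => two_sub_norm_normalize_sub_le hx (hy n)) hgap
    have := norm_sub_le (‖x‖⁻¹ • x) (y n)
    rw [hu, hy n] at this
    linarith
  simpa using (tendsto_const_nhds (x := (2 : ℝ))).sub hdefect

end Normalize

lemma exists_strictMono_tendsto_comp {α β : Type*} [TopologicalSpace α] [TopologicalSpace β]
    {f : α → β} (hf : Continuous f) {u : ℕ → α}
    (h : ∃ φ : ℕ → ℕ, StrictMono φ ∧ ∃ l, Tendsto (u ∘ φ) atTop (𝓝 l)) :
    ∃ φ : ℕ → ℕ, StrictMono φ ∧ ∃ l, Tendsto (f ∘ u ∘ φ) atTop (𝓝 l) :=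
  let ⟨φ, hφ, l, hl⟩ := h
  ⟨φ, hφ, f l, (hf.tendsto l).comp hl⟩

lemma norm_half_smul_add_eq {E : Type*} [NormedAddCommGroup E] [NormedSpace ℝ E] (y x : E) :
    ‖(1 / 2 : ℝ) • (y + x)‖ = ‖x - -y‖ / 2 := by
  rw [norm_smul, sub_neg_eq_add, add_comm x, Real.norm_of_nonneg (by norm_num)]
  ring

theorem stmt15_general {X : Type*} [NormedAddCommGroup X] [NormedSpace ℝ X] :
    (∀ (x : X) (xn : ℕ → X), ‖x‖ = 1 → (∀ n, ‖xn n‖ = 1) →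
        Tendsto (fun n => ‖(1 / 2 : ℝ) • (xn n + x)‖) atTop (𝓝 1) →
        ∃ φ : ℕ → ℕ, StrictMono φ ∧ ∃ l, Tendsto (xn ∘ φ) atTop (𝓝 l)) ↔
      ∀ (x : X), x ≠ 0 → ∀ yn : ℕ → X, (∀ n, ‖yn n‖ = 1) →
        Tendsto (fun n => ‖x - yn n‖) atTop (𝓝 (1 + ‖x‖)) →
        ∃ φ : ℕ → ℕ, StrictMono φ ∧ ∃ l, Tendsto (yn ∘ φ) atTop (𝓝 l) := by
  constructor
  · intro hclur x hx yn hyn hmax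
    have hmid : Tendsto (fun n => ‖(1 / 2 : ℝ) • (-yn n + ‖x‖⁻¹ • x)‖) atTop (𝓝 1) := by
      simp_rw [norm_half_smul_add_eq, neg_neg]
      simpa using (tendsto_norm_normalize_sub hx hyn hmax).div_const 2
    have hsub := hclur _ (-yn) (by simpa using norm_smul_inv_norm (𝕜 := ℝ) hx)
      (by simpa using hyn) hmid
    simpa [Function.comp_def] using exists_strictMono_tendsto_comp continuous_neg hsub
  · intro h x xn hx hxn hmid
    have hmax : Tendsto (fun n => ‖x - -xn n‖) atTop (𝓝 (1 + ‖x‖)) := by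
      simp_rw [norm_half_smul_add_eq] at hmid
      rw [hx, one_add_one_eq_two]
      simpa [mul_div_cancel₀] using hmid.const_mul 2
    have hsub := h x (norm_ne_zero_iff.mp (by rw [hx]; norm_num)) (-xn) (by simpa using hxn) hmax
    simpa [Function.comp_def] using exists_strictMono_tendsto_comp continuous_neg hsub

theorem stmt15 {X : Type*} [NormedAddCommGroup X] [NormedSpace ℝ X] [CompleteSpace X] :
    (∀ (x : X) (xn : ℕ → X), ‖x‖ = 1 → (∀ n, ‖xn n‖ = 1) →
        Tendsto (fun n => ‖(1 / 2 : ℝ) • (xn n + x)‖) atTop (𝓝 1) →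
        ∃ φ : ℕ → ℕ, StrictMono φ ∧ ∃ l, Tendsto (xn ∘ φ) atTop (𝓝 l)) ↔
      ∀ (x : X), x ≠ 0 → ∀ yn : ℕ → X, (∀ n, ‖yn n‖ = 1) →
        Tendsto (fun n => ‖x - yn n‖) atTop (𝓝 (1 + ‖x‖)) →
        ∃ φ : ℕ → ℕ, StrictMono φ ∧ ∃ l, Tendsto (yn ∘ φ) atTop (𝓝 l) :=
  stmt15_general
end

section
/- A real Banach space X is locally uniformly rotund (LUR) if and only if for every x ∈ X \ {0}, every maximizing sequence (y_n) in S_X for x (i.e., ‖x − y_n‖ → 1+‖x‖) converges to −x/‖x‖. -/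
open Filter Topology

theorem stmt16 {X : Type*} [NormedAddCommGroup X] [NormedSpace ℝ X] [CompleteSpace X] :
    (∀ (x : X) (xn : ℕ → X), ‖x‖ = 1 → (∀ n, ‖xn n‖ = 1) →
        Tendsto (fun n => ‖(1 / 2 : ℝ) • (xn n + x)‖) atTop (𝓝 1) →
        Tendsto xn atTop (𝓝 x)) ↔
      ∀ (x : X), x ≠ 0 → ∀ yn : ℕ → X, (∀ n, ‖yn n‖ = 1) →
        Tendsto (fun n => ‖x - yn n‖) atTop (𝓝 (1 + ‖x‖)) →
        Tendsto yn atTop (𝓝 (-(‖x‖⁻¹ • x))) := by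
  constructor
  · intro h x hx yn hyn htend
    set c := ‖x‖ with hc
    have hc0 : 0 < c := norm_pos_iff.mpr hx
    set u : X := c⁻¹ • x with hu
    have hun : ‖u‖ = 1 := by
      rw [hu, norm_smul, norm_inv, norm_norm, ← hc, inv_mul_cancel₀ hc0.ne']
    have hxu : x = c • u := by
      rw [hu, smul_smul, mul_inv_cancel₀ hc0.ne', one_smul]
    have hub : ∀ n, ‖u - yn n‖ ≤ 2 := by
      intro n
      calc ‖u - yn n‖ ≤ ‖u‖ + ‖yn n‖ := norm_sub_le _ _
      _ = 2 := by rw [hun, hyn n]; norm_num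
    have key : Tendsto (fun n => ‖u - yn n‖) atTop (𝓝 2) := by
      rcases le_or_gt 1 c with h1 | h1
      · have hlb : ∀ n, ‖x - yn n‖ - (c - 1) ≤ ‖u - yn n‖ := by
          intro n
          have hle : ‖x - yn n‖ ≤ ‖u - yn n‖ + (c - 1) := by
            calc ‖x - yn n‖ = ‖(u - yn n) + (c - 1) • u‖ := by
                  rw [hxu]; congr 1; module
            _ ≤ ‖u - yn n‖ + ‖(c - 1) • u‖ := norm_add_le _ _
            _ = ‖u - yn n‖ + (c - 1) := by
                  rw [norm_smul, hun, mul_one, Real.norm_of_nonneg (by linarith)]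
          linarith
        have hl : Tendsto (fun n => ‖x - yn n‖ - (c - 1)) atTop (𝓝 2) := by
          have h2 : (2 : ℝ) = (1 + c) - (c - 1) := by ring
          rw [h2]
          exact htend.sub_const (c - 1)
        exact tendsto_of_tendsto_of_tendsto_of_le_of_le hl tendsto_const_nhds hlb hub
      · have hlb : ∀ n, (‖x - yn n‖ - (1 - c)) / c ≤ ‖u - yn n‖ := by
          intro n
          have hle : ‖x - yn n‖ ≤ c * ‖u - yn n‖ + (1 - c) := by
            calc ‖x - yn n‖ = ‖c • (u - yn n) + (-(1 - c)) • yn n‖ := by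
                  rw [hxu]; congr 1; module
            _ ≤ ‖c • (u - yn n)‖ + ‖(-(1 - c)) • yn n‖ := norm_add_le _ _
            _ = c * ‖u - yn n‖ + (1 - c) := by
                  rw [norm_smul, norm_smul, hyn n, mul_one,
                    Real.norm_of_nonneg hc0.le, norm_neg,
                    Real.norm_of_nonneg (by linarith)]
          rw [div_le_iff₀ hc0]
          nlinarith
        have hl : Tendsto (fun n => (‖x - yn n‖ - (1 - c)) / c) atTop (𝓝 2) := by
          have h2 : (2 : ℝ) = ((1 + c) - (1 - c)) / c := by field_simp; ring
          rw [h2]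
          exact (htend.sub_const (1 - c)).div_const c
        exact tendsto_of_tendsto_of_tendsto_of_le_of_le hl tendsto_const_nhds hlb hub
    have h2 : Tendsto (fun n => ‖(1 / 2 : ℝ) • ((fun n => -yn n) n + u)‖) atTop (𝓝 1) := by
      have heq : ∀ n, ‖(1 / 2 : ℝ) • (-yn n + u)‖ = ‖u - yn n‖ / 2 := by
        intro n
        rw [norm_smul, neg_add_eq_sub]
        simp
        ring
      simp only [heq]
      have : (1 : ℝ) = 2 / 2 := by norm_num
      rw [this]
      exact key.div_const 2
    have hconv := h u (fun n => -yn n) hun (fun n => by simpa using hyn n) h2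
    have := hconv.neg
    simp only [neg_neg] at this
    simpa using this
  · intro h x xn hx hxn htend
    have hx0 : x ≠ 0 := by
      intro h0; rw [h0, norm_zero] at hx; norm_num at hx
    have ht : Tendsto (fun n => ‖x - (fun n => -xn n) n‖) atTop (𝓝 (1 + ‖x‖)) := by
      have heq : ∀ n, ‖x - -xn n‖ = 2 * ‖(1 / 2 : ℝ) • (xn n + x)‖ := by
        intro n
        rw [norm_smul, sub_neg_eq_add, add_comm]
        simp
      simp only [heq]
      have : (1 : ℝ) + ‖x‖ = 2 * 1 := by rw [hx]; ring
      rw [this]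
      exact htend.const_mul 2
    have hconv := h x hx0 (fun n => -xn n) (fun n => by simpa using hxn n) ht
    have := hconv.neg
    simp only [neg_neg, hx, inv_one, one_smul] at this
    exact this
end

section
/- A real Banach space X is LUR if and only if for every x ∈ X \ {0}, diam(Q_{S_X}(x, 1/n)) → 0 as n → ∞, where Q_{S_X}(x,δ) = {y ∈ S_X : ‖x−y‖ ≥ 1+‖x‖−δ}. -/
/-!
If `y` is a `δ`-almost farthest point of the sphere from `x ≠ 0`, then `y` is almost antipodal
to `v = x / ‖x‖`: `‖v - y‖ ≥ 2 - δ / min ‖x‖ 1`. Under LUR (applied at `-v`) this forces the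
whole set `Q(x, δ)` to shrink to the point `-v` as `δ → 0`, so its diameter tends to `0`.
Conversely, for a unit vector `x`, a unit `y` with `‖(y + x) / 2‖ ≥ 1 - δ / 2` lies in `Q(-x, δ)`,
as does `x` itself, so `‖y - x‖ ≤ diam Q(-x, δ)`.
-/

open Filter Topology

/-- δ-almost farthest points of the unit sphere from `x`, using `r(S_X, x) = 1 + ‖x‖`. -/
def QS {X : Type*} [NormedAddCommGroup X] (x : X) (δ : ℝ) : Set X :=
  {y | ‖y‖ = 1 ∧ 1 + ‖x‖ - δ ≤ ‖x - y‖}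

open Metric

def LocallyUniformlyRotund (X : Type*) [NormedAddCommGroup X] [NormedSpace ℝ X] : Prop :=
  ∀ (x : X) (xn : ℕ → X), ‖x‖ = 1 → (∀ n, ‖xn n‖ = 1) →
    Tendsto (fun n => ‖(1 / 2 : ℝ) • (xn n + x)‖) atTop (𝓝 1) → Tendsto xn atTop (𝓝 x)

section QS

variable {X : Type*} [NormedAddCommGroup X]

lemma QS_mono (x : X) {δ δ' : ℝ} (h : δ ≤ δ') : QS x δ ⊆ QS x δ' :=
  fun _ hy => ⟨hy.1, by linarith [hy.2]⟩

lemma isBounded_QS (x : X) (δ : ℝ) : Bornology.IsBounded (QS x δ) :=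
  (isBounded_sphere (x := 0) (r := 1)).subset fun y hy => by simpa using hy.1

variable [NormedSpace ℝ X]

lemma norm_inv_norm_smul {x : X} (hx : x ≠ 0) : ‖‖x‖⁻¹ • x‖ = 1 := by
  rw [norm_smul, norm_inv, norm_norm, inv_mul_cancel₀ (norm_ne_zero_iff.2 hx)]

lemma norm_half_smul (y : X) : ‖(1 / 2 : ℝ) • y‖ = ‖y‖ / 2 := by
  rw [norm_smul, Real.norm_of_nonneg (by norm_num)]
  ring

lemma mem_QS_neg_iff {x y : X} {δ : ℝ} (hx : ‖x‖ = 1) :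
    y ∈ QS (-x) δ ↔ ‖y‖ = 1 ∧ 1 - δ / 2 ≤ ‖(1 / 2 : ℝ) • (y + x)‖ := by
  rw [QS, Set.mem_ofPred_eq, norm_neg, hx, norm_half_smul, ← norm_neg (-x - y),
    neg_sub, sub_neg_eq_add]
  constructor <;> rintro ⟨hy, h⟩ <;> exact ⟨hy, by linarith⟩

lemma self_mem_QS_neg {x : X} {δ : ℝ} (hx : ‖x‖ = 1) (hδ : 0 ≤ δ) : x ∈ QS (-x) δ := by
  rw [mem_QS_neg_iff hx, ← two_smul ℝ x, smul_smul, norm_smul]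
  norm_num [hx]
  linarith

lemma two_sub_le_norm_sub {v y : X} {a δ : ℝ} (ha : 0 < a) (hv : ‖v‖ = 1) (hy : ‖y‖ = 1)
    (h : 1 + a - δ ≤ ‖a • v - y‖) : 2 - δ / min a 1 ≤ ‖v - y‖ := by
  rcases le_total 1 a with h1 | h1
  · have : ‖a • v - y‖ ≤ ‖v - y‖ + (a - 1) :=
      calc ‖a • v - y‖ = ‖(v - y) + (a - 1) • v‖ := by congr 1; module
        _ ≤ ‖v - y‖ + ‖(a - 1) • v‖ := norm_add_le _ _
        _ = ‖v - y‖ + (a - 1) := by rw [norm_smul, hv, Real.norm_of_nonneg (by linarith), mul_one]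
    rw [min_eq_right h1, div_one]
    linarith
  · have : ‖a • v - y‖ ≤ a * ‖v - y‖ + (1 - a) :=
      calc ‖a • v - y‖ = ‖a • (v - y) - (1 - a) • y‖ := by congr 1; module
        _ ≤ ‖a • (v - y)‖ + ‖(1 - a) • y‖ := norm_sub_le _ _
        _ = a * ‖v - y‖ + (1 - a) := by
          rw [norm_smul, norm_smul, hy, Real.norm_of_nonneg ha.le,
            Real.norm_of_nonneg (by linarith), mul_one]
    rw [min_eq_left h1, sub_le_iff_le_add, ← sub_le_iff_le_add', le_div_iff₀ ha]
    linarith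

lemma two_sub_le_norm_normalize_sub_of_mem_QS {x y : X} {δ : ℝ} (hx : x ≠ 0)
    (hy : y ∈ QS x δ) : 2 - δ / min ‖x‖ 1 ≤ ‖‖x‖⁻¹ • x - y‖ := by
  have hx' : 0 < ‖x‖ := norm_pos_iff.2 hx
  refine two_sub_le_norm_sub hx' (norm_inv_norm_smul hx) hy.1 ?_
  rw [smul_smul, mul_inv_cancel₀ hx'.ne', one_smul]
  exact hy.2

lemma tendsto_norm_midpoint_of_mem_QS {x : X} (hx : x ≠ 0) {δ : ℕ → ℝ}
    (hδ : Tendsto δ atTop (𝓝 0)) {w : ℕ → X} (hw : ∀ n, w n ∈ QS x (δ n)) :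
    Tendsto (fun n => ‖(1 / 2 : ℝ) • (w n + -(‖x‖⁻¹ • x))‖) atTop (𝓝 1) := by
  have hlow : Tendsto (fun n => 1 - δ n / min ‖x‖ 1 / 2) atTop (𝓝 1) := by
    simpa using tendsto_const_nhds.sub ((hδ.div_const _).div_const 2)
  refine tendsto_of_tendsto_of_tendsto_of_le_of_le hlow tendsto_const_nhds (fun n => ?_)
    (fun n => ?_) <;> rw [norm_half_smul, ← sub_eq_add_neg, norm_sub_rev]
  · linarith [two_sub_le_norm_normalize_sub_of_mem_QS hx (hw n)]
  · linarith [norm_sub_le (‖x‖⁻¹ • x) (w n), norm_inv_norm_smul hx, (hw n).1]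

end QS

namespace LocallyUniformlyRotund

variable {X : Type*} [NormedAddCommGroup X] [NormedSpace ℝ X]

lemma exists_forall_mem_QS_dist_lt (hX : LocallyUniformlyRotund X) {x : X} (hx : x ≠ 0)
    {ε : ℝ} (hε : 0 < ε) : ∃ δ > 0, ∀ y ∈ QS x δ, dist y (-(‖x‖⁻¹ • x)) < ε := by
  by_contra! h
  choose y hy hyε using fun n : ℕ => h (1 / (n + 1)) Nat.one_div_pos_of_nat
  have hlim : Tendsto y atTop (𝓝 (-(‖x‖⁻¹ • x))) :=
    hX _ y (by rw [norm_neg, norm_inv_norm_smul hx]) (fun n => (hy n).1)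
      (tendsto_norm_midpoint_of_mem_QS hx tendsto_one_div_add_atTop_nhds_zero_nat hy)
  obtain ⟨n, hn⟩ := (hlim.eventually (ball_mem_nhds _ hε)).exists
  exact (hyε n).not_gt hn

lemma tendsto_diam_QS (hX : LocallyUniformlyRotund X) {x : X} (hx : x ≠ 0) :
    Tendsto (fun n : ℕ => diam (QS x (1 / n))) atTop (𝓝 0) := by
  rw [Metric.tendsto_atTop]
  intro ε hε
  obtain ⟨δ, hδ, hnear⟩ := hX.exists_forall_mem_QS_dist_lt hx (div_pos hε three_pos)
  obtain ⟨N, hN⟩ := exists_nat_one_div_lt hδ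
  refine ⟨N + 1, fun n hn => ?_⟩
  have hsub : QS x (1 / n) ⊆ QS x δ := QS_mono x <| by
    refine le_trans ?_ hN.le
    gcongr
    exact_mod_cast hn
  have hdiam : diam (QS x (1 / n)) ≤ 2 * (ε / 3) :=
    diam_le_of_forall_dist_le (by positivity) fun y hy z hz =>
      (dist_triangle_right y z (-(‖x‖⁻¹ • x))).trans
        (by linarith [hnear y (hsub hy), hnear z (hsub hz)])
  rw [Real.dist_0_eq_abs, abs_of_nonneg diam_nonneg]
  linarith

end LocallyUniformlyRotund

lemma locallyUniformlyRotund_of_tendsto_diam_QS {X : Type*} [NormedAddCommGroup X]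
    [NormedSpace ℝ X]
    (h : ∀ x : X, x ≠ 0 → Tendsto (fun n : ℕ => diam (QS x (1 / n))) atTop (𝓝 0)) :
    LocallyUniformlyRotund X := by
  intro x xn hx hxn hmid
  rw [Metric.tendsto_atTop]
  intro ε hε
  have hx0 : x ≠ 0 := by rintro rfl; simp at hx
  obtain ⟨N, hN, hdiam⟩ := ((eventually_ge_atTop 1).and
    ((h (-x) (neg_ne_zero.2 hx0)).eventually (gt_mem_nhds hε))).exists
  have hδ : (0 : ℝ) < 1 / N := by
    have : (1 : ℝ) ≤ N := by exact_mod_cast hN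
    positivity
  obtain ⟨M, hM⟩ := eventually_atTop.1 (hmid.eventually (lt_mem_nhds (by linarith :
    1 - 1 / (N : ℝ) / 2 < 1)))
  refine ⟨M, fun n hn => ?_⟩
  calc dist (xn n) x ≤ diam (QS (-x) (1 / N)) :=
        dist_le_diam_of_mem (isBounded_QS _ _)
          ((mem_QS_neg_iff hx).2 ⟨hxn n, (hM n hn).le⟩) (self_mem_QS_neg hx hδ.le)
    _ < ε := hdiam

theorem stmt17_general {X : Type*} [NormedAddCommGroup X] [NormedSpace ℝ X] :
    (∀ (x : X) (xn : ℕ → X), ‖x‖ = 1 → (∀ n, ‖xn n‖ = 1) →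
        Tendsto (fun n => ‖(1 / 2 : ℝ) • (xn n + x)‖) atTop (𝓝 1) →
        Tendsto xn atTop (𝓝 x)) ↔
      ∀ x : X, x ≠ 0 →
        Tendsto (fun n : ℕ => Metric.diam (QS x (1 / n))) atTop (𝓝 0) :=
  ⟨fun hX _ hx => LocallyUniformlyRotund.tendsto_diam_QS hX hx,
    locallyUniformlyRotund_of_tendsto_diam_QS⟩

theorem stmt17 {X : Type*} [NormedAddCommGroup X] [NormedSpace ℝ X] [CompleteSpace X] :
    (∀ (x : X) (xn : ℕ → X), ‖x‖ = 1 → (∀ n, ‖xn n‖ = 1) →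
        Tendsto (fun n => ‖(1 / 2 : ℝ) • (xn n + x)‖) atTop (𝓝 1) →
        Tendsto xn atTop (𝓝 x)) ↔
      ∀ x : X, x ≠ 0 →
        Tendsto (fun n : ℕ => Metric.diam (QS x (1 / n))) atTop (𝓝 0) :=
  stmt17_general
end

section
/- A real Banach space X is uniformly rotund (UR) if and only if diam(Q_{S_X}(x, 1/n)) → 0 uniformly in x over X \ B_X (i.e., for every ε>0 there is N such that for all n ≥ N and all x with ‖x‖ > 1, diam(Q_{S_X}(x,1/n)) < ε). -/
open Filter Topology

theorem stmt18 {X : Type*} [NormedAddCommGroup X] [NormedSpace ℝ X] [CompleteSpace X] :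
    (∀ xn yn : ℕ → X, (∀ n, ‖xn n‖ = 1) → (∀ n, ‖yn n‖ = 1) →
        Tendsto (fun n => ‖(1 / 2 : ℝ) • (xn n + yn n)‖) atTop (𝓝 1) →
        Tendsto (fun n => ‖xn n - yn n‖) atTop (𝓝 0)) ↔
      ∀ ε > (0 : ℝ), ∃ N : ℕ, ∀ n ≥ N, ∀ x : X, 1 < ‖x‖ →
        Metric.diam (QS x (1 / n)) < ε := by
  constructor
  · intro hUR ε hε
    -- A uniform modulus of uniform rotundity
    have huni : ∀ ε' > (0 : ℝ), ∃ δ > (0 : ℝ), ∀ u v : X, ‖u‖ = 1 → ‖v‖ = 1 →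
        1 - δ ≤ ‖(1 / 2 : ℝ) • (u + v)‖ → ‖u - v‖ < ε' := by
      intro ε' hε'
      by_contra hcon
      push_neg at hcon
      choose u v hu hv hm hd using fun k : ℕ => hcon (1 / (k + 1)) (by positivity)
      have hmid : Tendsto (fun k => ‖(1 / 2 : ℝ) • (u k + v k)‖) atTop (𝓝 1) := by
        have hlim : Tendsto (fun k : ℕ => 1 - 1 / (k + 1 : ℝ)) atTop (𝓝 1) := by
          have h0 := (tendsto_one_div_add_atTop_nhds_zero_nat).const_sub (1 : ℝ)
          simpa using h0
        refine tendsto_of_tendsto_of_tendsto_of_le_of_le hlim tendsto_const_nhds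
          (fun k => hm k) (fun k => ?_)
        have hle : ‖(1 / 2 : ℝ) • (u k + v k)‖ = (1 / 2) * ‖u k + v k‖ := by
          rw [norm_smul]; simp [Real.norm_eq_abs, abs_of_nonneg]
        have := norm_add_le (u k) (v k)
        rw [hu k, hv k] at this
        rw [hle]; linarith
      have hzero := hUR u v hu hv hmid
      obtain ⟨k, hk⟩ := (hzero.eventually (gt_mem_nhds hε')).exists
      exact absurd (hd k) (not_le.mpr hk)
    obtain ⟨δ, hδ, hδ'⟩ := huni (ε / 3) (by linarith)
    obtain ⟨N, hN⟩ := exists_nat_one_div_lt hδ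
    refine ⟨N + 1, fun n hn x hx => ?_⟩
    have hn1 : (1 : ℕ) ≤ n := le_trans (by omega) hn
    have hnpos : (0 : ℝ) < n := by exact_mod_cast hn1
    have h1n : 1 / (n : ℝ) < δ := by
      calc 1 / (n : ℝ) ≤ 1 / (N + 1 : ℝ) := by
            apply one_div_le_one_div_of_le (by positivity)
            exact_mod_cast hn
        _ < δ := hN
    have hxpos : (0 : ℝ) < ‖x‖ := lt_trans one_pos hx
    set w : X := ‖x‖⁻¹ • x with hw_def
    have hw : ‖w‖ = 1 := by
      rw [hw_def, norm_smul, norm_inv, norm_norm, inv_mul_cancel₀ (ne_of_gt hxpos)]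
    have hxw : ‖x - w‖ = ‖x‖ - 1 := by
      have : x - w = (1 - ‖x‖⁻¹) • x := by
        rw [sub_smul, one_smul, hw_def]
      rw [this, norm_smul, Real.norm_eq_abs, abs_of_nonneg]
      · field_simp
      · have : ‖x‖⁻¹ < 1 := by
          rw [inv_lt_one_iff₀]; right; exact hx
        linarith
    -- every point of QS x (1/n) is within ε/3 of -w
    have key : ∀ y ∈ QS x (1 / n), ‖y - -w‖ < ε / 3 := by
      rintro y ⟨hy1, hy2⟩
      have hnw : ‖(-w : X)‖ = 1 := by rw [norm_neg]; exact hw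
      apply hδ' y (-w) hy1 hnw
      have hyw : 2 - 1 / (n : ℝ) ≤ ‖y - w‖ := by
        have h1 : ‖x - y‖ - ‖x - w‖ ≤ ‖(x - y) - (x - w)‖ := norm_sub_norm_le _ _
        have h2 : (x - y) - (x - w) = w - y := by abel
        rw [h2, norm_sub_rev w y, hxw] at h1
        linarith
      have heq : ‖(1 / 2 : ℝ) • (y + -w)‖ = (1 / 2) * ‖y - w‖ := by
        rw [norm_smul]; simp [Real.norm_eq_abs, abs_of_nonneg, sub_eq_add_neg]
      rw [heq]
      linarith
    have hdiam : Metric.diam (QS x (1 / n)) ≤ 2 * ε / 3 := by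
      apply Metric.diam_le_of_forall_dist_le (by linarith)
      intro y hy z hz
      have h1 := key y hy
      have h2 := key z hz
      have : y - z = (y - -w) - (z - -w) := by abel
      rw [dist_eq_norm, this]
      calc ‖(y - -w) - (z - -w)‖ ≤ ‖y - -w‖ + ‖z - -w‖ := norm_sub_le _ _
        _ ≤ 2 * ε / 3 := by linarith
    linarith
  · intro h xn yn hxn hyn hmid
    rw [Metric.tendsto_atTop]
    intro ε hε
    obtain ⟨N, hN⟩ := h ε hε
    set n₀ : ℕ := N + 1 with hn₀
    have hn₀pos : (0 : ℝ) < n₀ := by positivity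
    have hn₀le : 1 / (n₀ : ℝ) ≤ 1 := by
      rw [div_le_one hn₀pos]; exact_mod_cast Nat.le_add_left 1 N
    -- ‖xn k + yn k‖ → 2
    have hsum : Tendsto (fun k => ‖xn k + yn k‖) atTop (𝓝 2) := by
      have h2 := hmid.const_mul (2 : ℝ)
      have heq : (fun k => 2 * ‖(1 / 2 : ℝ) • (xn k + yn k)‖) =
          fun k => ‖xn k + yn k‖ := by
        funext k
        rw [norm_smul, Real.norm_eq_abs, abs_of_nonneg (by norm_num : (0:ℝ) ≤ 1/2)]
        ring
      rw [heq] at h2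
      convert h2 using 2
      norm_num
    have hlt : 2 - 1 / (n₀ : ℝ) < 2 := by
      have : (0 : ℝ) < 1 / (n₀ : ℝ) := by positivity
      linarith
    have hev : ∀ᶠ k in atTop, 2 - 1 / (n₀ : ℝ) < ‖xn k + yn k‖ :=
      hsum.eventually (lt_mem_nhds hlt)
    obtain ⟨K, hK⟩ := eventually_atTop.mp hev
    refine ⟨K, fun k hk => ?_⟩
    have hsk := hK k hk
    set p : X := xn k + yn k with hp
    set s : ℝ := ‖p‖ with hs
    have hs1 : (1 : ℝ) ≤ s := by
      have : 2 - 1 / (n₀ : ℝ) ≥ 1 := by linarith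
      linarith [hsk]
    have hspos : (0 : ℝ) < s := by linarith
    set c : ℝ := 2 / s with hc
    have hcs : c * s = 2 := div_mul_cancel₀ 2 (ne_of_gt hspos)
    set x : X := c • p with hxdef
    have hxnorm : ‖x‖ = 2 := by
      rw [hxdef, norm_smul, Real.norm_eq_abs, abs_of_pos (by positivity), ← hs, hcs]
    have hxgt : 1 < ‖x‖ := by rw [hxnorm]; norm_num
    -- ‖x + x + p‖ = 4 + s
    have hbig : ‖x + x + p‖ = 4 + s := by
      have : x + x + p = (c + c + 1) • p := by
        rw [add_smul, add_smul, one_smul, hxdef]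
      rw [this, norm_smul, Real.norm_eq_abs, abs_of_pos (by positivity), ← hs]
      have hx2 : (c + c + 1) * s = c * s + c * s + s := by ring
      rw [hx2, hcs]; ring
    have hxyn : ‖x + yn k‖ ≤ 3 := by
      calc ‖x + yn k‖ ≤ ‖x‖ + ‖yn k‖ := norm_add_le _ _
        _ = 3 := by rw [hxnorm, hyn k]; norm_num
    have hxxn : ‖x + xn k‖ ≤ 3 := by
      calc ‖x + xn k‖ ≤ ‖x‖ + ‖xn k‖ := norm_add_le _ _
        _ = 3 := by rw [hxnorm, hxn k]; norm_num
    have hlow1 : 1 + s ≤ ‖x + xn k‖ := by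
      have h1 : ‖x + x + p‖ - ‖x + yn k‖ ≤ ‖(x + x + p) - (x + yn k)‖ :=
        norm_sub_norm_le _ _
      have h2 : (x + x + p) - (x + yn k) = x + xn k := by rw [hp]; abel
      rw [h2, hbig] at h1
      linarith
    have hlow2 : 1 + s ≤ ‖x + yn k‖ := by
      have h1 : ‖x + x + p‖ - ‖x + xn k‖ ≤ ‖(x + x + p) - (x + xn k)‖ :=
        norm_sub_norm_le _ _
      have h2 : (x + x + p) - (x + xn k) = x + yn k := by rw [hp]; abel
      rw [h2, hbig] at h1
      linarith
    have hmem1 : -xn k ∈ QS x (1 / n₀) := by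
      constructor
      · rw [norm_neg]; exact hxn k
      · have : x - -xn k = x + xn k := by abel
        rw [this, hxnorm]
        have : 2 - 1 / (n₀ : ℝ) < s := hsk
        linarith
    have hmem2 : -yn k ∈ QS x (1 / n₀) := by
      constructor
      · rw [norm_neg]; exact hyn k
      · have : x - -yn k = x + yn k := by abel
        rw [this, hxnorm]
        have : 2 - 1 / (n₀ : ℝ) < s := hsk
        linarith
    have hbdd : Bornology.IsBounded (QS x (1 / n₀)) := by
      apply (Metric.isBounded_closedBall (x := (0 : X)) (r := 1)).subset
      rintro y ⟨hy1, -⟩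
      rw [Metric.mem_closedBall, dist_zero_right, hy1]
    have hdist := Metric.dist_le_diam_of_mem hbdd hmem1 hmem2
    have hdiam := hN n₀ (by omega) x hxgt
    have hdd : dist (-xn k) (-yn k) = ‖xn k - yn k‖ := by
      rw [dist_eq_norm]
      have : -xn k - -yn k = -(xn k - yn k) := by abel
      rw [this, norm_neg]
    rw [Real.dist_eq, sub_zero, abs_of_nonneg (norm_nonneg _)]
    rw [hdd] at hdist
    linarith
end

section
/- If a real Banach space X is uniformly rotund, then d(Q_{S_X}(x, 1/n), Q_{S_X}(−x, 1/n)) → 2 uniformly in x ∈ S_X, where d(A,B) = inf{‖a−b‖ : a∈A, b∈B}. -/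
open Filter Topology

/-- The distance between two sets. -/
noncomputable def setDist {X : Type*} [NormedAddCommGroup X] (A B : Set X) : ℝ :=
  sInf {d | ∃ a ∈ A, ∃ b ∈ B, d = ‖a - b‖}

lemma modulus_aux {X : Type*} [NormedAddCommGroup X] [NormedSpace ℝ X]
    (hUR : ∀ xn yn : ℕ → X, (∀ n, ‖xn n‖ = 1) → (∀ n, ‖yn n‖ = 1) →
      Tendsto (fun n => ‖(1 / 2 : ℝ) • (xn n + yn n)‖) atTop (𝓝 1) →
      Tendsto (fun n => ‖xn n - yn n‖) atTop (𝓝 0)) :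
    ∀ ε > (0 : ℝ), ∃ δ > (0 : ℝ), ∀ u v : X, ‖u‖ = 1 → ‖v‖ = 1 →
      1 - δ < ‖(1 / 2 : ℝ) • (u + v)‖ → ‖u - v‖ < ε := by
  intro ε hε
  by_contra h
  push_neg at h
  choose u v hu hv hmid hfar using fun k : ℕ =>
    h (1 / ((k : ℝ) + 1)) (by positivity)
  have hsq : Tendsto (fun k => ‖(1 / 2 : ℝ) • (u k + v k)‖) atTop (𝓝 1) := by
    have hlo : Tendsto (fun k : ℕ => 1 - 1 / ((k : ℝ) + 1)) atTop (𝓝 1) := by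
      have := (tendsto_one_div_add_atTop_nhds_zero_nat).const_sub (1 : ℝ)
      simpa using this
    refine tendsto_of_tendsto_of_tendsto_of_le_of_le hlo tendsto_const_nhds
      (fun k => (hmid k).le) (fun k => ?_)
    have : ‖(1 / 2 : ℝ) • (u k + v k)‖ = (1/2) * ‖u k + v k‖ := by
      rw [norm_smul]; norm_num
    have h2 : ‖u k + v k‖ ≤ 2 := by
      calc ‖u k + v k‖ ≤ ‖u k‖ + ‖v k‖ := norm_add_le _ _
        _ = 2 := by rw [hu k, hv k]; norm_num
    linarith [this]
  have h0 := hUR u v hu hv hsq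
  have := (h0.eventually (eventually_lt_nhds hε)).exists
  obtain ⟨k, hk⟩ := this
  exact absurd (hfar k) (not_le.mpr hk)

theorem stmt19 {X : Type*} [NormedAddCommGroup X] [NormedSpace ℝ X] [CompleteSpace X]
    (hUR : ∀ xn yn : ℕ → X, (∀ n, ‖xn n‖ = 1) → (∀ n, ‖yn n‖ = 1) →
      Tendsto (fun n => ‖(1 / 2 : ℝ) • (xn n + yn n)‖) atTop (𝓝 1) →
      Tendsto (fun n => ‖xn n - yn n‖) atTop (𝓝 0)) :
    ∀ ε > (0 : ℝ), ∃ N : ℕ, ∀ n ≥ N, ∀ x : X, ‖x‖ = 1 →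
      |setDist (QS x (1 / n)) (QS (-x) (1 / n)) - 2| < ε := by
  intro ε hε
  obtain ⟨δ, hδ, hmod⟩ := modulus_aux hUR (ε / 4) (by linarith)
  obtain ⟨N, hN⟩ := exists_nat_gt (1 / δ)
  refine ⟨N, fun n hn x hx => ?_⟩
  have hNpos : 0 < (N : ℝ) := lt_trans (by positivity) hN
  have hnpos : 0 < (n : ℝ) := lt_of_lt_of_le hNpos (by exact_mod_cast hn)
  have hinv : (1 : ℝ) / n < δ := by
    rw [div_lt_iff₀ hnpos]
    have h1 : (1 : ℝ) / δ < (n : ℝ) := lt_of_lt_of_le hN (by exact_mod_cast hn)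
    rw [div_lt_iff₀ hδ] at h1
    linarith
  have hinvpos : 0 < (1 : ℝ) / n := by positivity
  set S : Set ℝ := {d | ∃ a ∈ QS x ((1 : ℝ) / n), ∃ b ∈ QS (-x) ((1 : ℝ) / n), d = ‖a - b‖}
    with hS
  have hxx : ‖x + x‖ = 2 := by
    have : x + x = (2 : ℝ) • x := (two_smul ℝ x).symm
    rw [this, norm_smul, hx]; norm_num
  have hmemA : (-x) ∈ QS x ((1 : ℝ) / n) := by
    refine ⟨by rw [norm_neg, hx], ?_⟩
    rw [hx, sub_neg_eq_add, hxx]; linarith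
  have hmemB : x ∈ QS (-x) ((1 : ℝ) / n) := by
    refine ⟨hx, ?_⟩
    rw [norm_neg, hx]
    have : ‖-x - x‖ = 2 := by rw [show -x - x = -(x + x) by abel, norm_neg, hxx]
    rw [this]; linarith
  have h2S : (2 : ℝ) ∈ S := by
    refine ⟨-x, hmemA, x, hmemB, ?_⟩
    rw [show -x - x = -(x + x) by abel, norm_neg, hxx]
  have hlower : ∀ d ∈ S, 2 - ε / 2 ≤ d := by
    rintro d ⟨a, ⟨ha1, ha2⟩, b, ⟨hb1, hb2⟩, rfl⟩
    rw [hx] at ha2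
    rw [norm_neg, hx] at hb2
    -- ‖x + a‖ < ε/4
    have hxa : ‖x + a‖ < ε / 4 := by
      have hmid : 1 - δ < ‖(1 / 2 : ℝ) • (x + -a)‖ := by
        rw [norm_smul, show x + -a = x - a by abel,
          show ‖(1 / 2 : ℝ)‖ = 1 / 2 by rw [Real.norm_eq_abs]; norm_num]
        linarith
      have := hmod x (-a) hx (by rw [norm_neg, ha1]) hmid
      rwa [sub_neg_eq_add] at this
    -- ‖x - b‖ < ε/4
    have hxb : ‖x - b‖ < ε / 4 := by
      have hnb : ‖x + b‖ = ‖-x - b‖ := by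
        rw [show -x - b = -(x + b) by abel, norm_neg]
      have hmid : 1 - δ < ‖(1 / 2 : ℝ) • (x + b)‖ := by
        rw [norm_smul, show ‖(1 / 2 : ℝ)‖ = 1 / 2 by rw [Real.norm_eq_abs]; norm_num, hnb]
        linarith
      exact hmod x b hx hb1 hmid
    have hdecomp : x + x = (x + a) + (x - b) + (b - a) := by abel
    have htri : ‖x + x‖ ≤ ‖x + a‖ + ‖x - b‖ + ‖b - a‖ := by
      rw [hdecomp]; exact norm_add₃_le
    rw [hxx, norm_sub_rev b a] at htri
    linarith
  have hbdd : BddBelow S := ⟨2 - ε / 2, hlower⟩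
  have hle : sInf S ≤ 2 := csInf_le hbdd h2S
  have hge : 2 - ε / 2 ≤ sInf S := le_csInf ⟨2, h2S⟩ hlower
  have : setDist (QS x ((1 : ℝ) / n)) (QS (-x) ((1 : ℝ) / n)) = sInf S := rfl
  rw [this, abs_lt]
  constructor <;> linarith
end
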